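/- For the Basis I chain complex (V₂, ∂₂) in the second Spin^c structure, the kernel of ∂₂ equals the image of ∂₂; that is, the homology of (V₂, ∂₂) is trivial. -/

import Mathlib

/-!
In the basis `A, B, …, G₃₂` the differential is a `16 × 16` matrix `M` over `𝔽₂` with `M² = 0`,
and an explicit matrix `H` satisfies `H M + M H = 1`. Then `H` is a contracting homotopy: every
cycle `x` equals `∂(H x)`.
-/

/-- The basis vectors `A, B, C₃, D₁₁, D₁₂, D₂₁, D₂₂, E₂₁, E₂₂, F₂, G₁₁, G₁₂, G₂₁, G₂₂,
G₃₁, G₃₂` (in this order) of the 16-dimensional vector space `V₂ = (Fin 16 → ZMod 2)`. -/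
def e (i : Fin 16) : Fin 16 → ZMod 2 := Pi.single i 1

open Matrix

theorem LinearMap.ker_eq_range_of_comp_self_eq_zero_of_homotopy {R M : Type*} [Semiring R]
    [AddCommMonoid M] [Module R M] {D h : M →ₗ[R] M} (hD : D ∘ₗ D = 0)
    (hh : h ∘ₗ D + D ∘ₗ h = LinearMap.id) :
    LinearMap.ker D = LinearMap.range D := by
  apply le_antisymm
  · intro x hx
    refine ⟨h x, ?_⟩
    calc D (h x) = h (D x) + D (h x) := by rw [LinearMap.mem_ker.mp hx, map_zero, zero_add]
      _ = x := LinearMap.congr_fun hh x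
  · rintro _ ⟨y, rfl⟩
    exact LinearMap.congr_fun hD y

theorem LinearMap.eq_toLin'_of_apply_single {R n m : Type*} [CommSemiring R] [Fintype n]
    [DecidableEq n] (f : (n → R) →ₗ[R] (m → R)) (v : n → m → R)
    (hf : ∀ j, f (Pi.single j 1) = v j) : f = toLin' (of v)ᵀ := by
  apply LinearMap.toMatrix'.injective
  ext i j
  simp [LinearMap.toMatrix'_apply, hf]

def boundaryMatrix : Matrix (Fin 16) (Fin 16) (ZMod 2) :=
  (of ![e 1, 0, e 1, e 1 + e 10 + e 4, e 11, e 6, 0, e 8, 0, e 8 + e 2 + e 0, e 11, 0,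
    e 7 + e 10 + e 13, e 8 + e 11, e 5 + e 15, e 6])ᵀ

/-- `B ↦ A`, `C₃ ↦ F₂ + E₂₁`, `D₁₂ ↦ D₁₁ + A`, `D₂₂ ↦ D₂₁`, `E₂₂ ↦ E₂₁`, `G₁₂ ↦ G₁₁`,
`G₂₂ ↦ G₂₁`, `G₃₂ ↦ G₃₁`, and the other generators to `0`. -/
def homotopyMatrix : Matrix (Fin 16) (Fin 16) (ZMod 2) :=
  (of ![0, e 0, e 9 + e 7, 0, e 3 + e 0, 0, e 5, 0, e 7, 0, 0, e 10, 0, e 12, 0, e 14])ᵀ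

theorem boundaryMatrix_mul_self : boundaryMatrix * boundaryMatrix = 0 := by decide

theorem homotopyMatrix_mul_add_mul_homotopyMatrix :
    homotopyMatrix * boundaryMatrix + boundaryMatrix * homotopyMatrix = 1 := by decide

/-- For the Basis I chain complex `(V₂, ∂₂)` in the second `Spin^c` structure,
`ker ∂₂ = im ∂₂`, i.e. the homology of `(V₂, ∂₂)` is trivial. -/
theorem stmt5 (D : (Fin 16 → ZMod 2) →ₗ[ZMod 2] (Fin 16 → ZMod 2))
    (hA : D (e 0) = e 1)
    (hB : D (e 1) = 0)
    (hC3 : D (e 2) = e 1)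
    (hD11 : D (e 3) = e 1 + e 10 + e 4)
    (hD12 : D (e 4) = e 11)
    (hD21 : D (e 5) = e 6)
    (hD22 : D (e 6) = 0)
    (hE21 : D (e 7) = e 8)
    (hE22 : D (e 8) = 0)
    (hF2 : D (e 9) = e 8 + e 2 + e 0)
    (hG11 : D (e 10) = e 11)
    (hG12 : D (e 11) = 0)
    (hG21 : D (e 12) = e 7 + e 10 + e 13)
    (hG22 : D (e 13) = e 8 + e 11)
    (hG31 : D (e 14) = e 5 + e 15)
    (hG32 : D (e 15) = e 6)
    :
    LinearMap.ker D = LinearMap.range D := by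
  obtain rfl : D = toLin' boundaryMatrix :=
    D.eq_toLin'_of_apply_single _ fun j => by fin_cases j <;> assumption
  apply LinearMap.ker_eq_range_of_comp_self_eq_zero_of_homotopy (h := toLin' homotopyMatrix)
  · rw [← toLin'_mul, boundaryMatrix_mul_self, map_zero]
  · rw [← toLin'_mul, ← toLin'_mul, ← map_add, homotopyMatrix_mul_add_mul_homotopyMatrix,
      toLin'_one]
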